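/- There exist a may-must argumentation F = (A, R, f_Q), an argument a ∈ A, a labelling λ, and two distinct labels l₁ ≠ l₂ such that λ designates both l₁ and l₂ for a. (Label designation can be non-deterministic.) -/

import Mathlib

inductive Lab : Type
  | inn | out | undec
deriving DecidableEq

structure MMA (A : Type) [Fintype A] [DecidableEq A] where
  R : A → A → Prop
  decR : DecidableRel R
  n1 : A → ℕ
  n2 : A → ℕ
  m1 : A → ℕ
  m2 : A → ℕ
  hn : ∀ a, n1 a ≤ n2 a
  hm : ∀ a, m1 a ≤ m2 a

variable {A : Type} [Fintype A] [DecidableEq A]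

/-- Number of attackers of `a` labelled `out` by `lam`. -/
def outCnt (F : MMA A) (lam : A → Lab) (a : A) : ℕ :=
  letI := F.decR
  (Finset.univ.filter (fun b => F.R b a ∧ lam b = Lab.out)).card

/-- Number of attackers of `a` labelled `in` by `lam`. -/
def inCnt (F : MMA A) (lam : A → Lab) (a : A) : ℕ :=
  letI := F.decR
  (Finset.univ.filter (fun b => F.R b a ∧ lam b = Lab.inn)).card

/-- `lam` designates label `l` for argument `a` in `F`. -/
def designates (F : MMA A) (lam : A → Lab) (a : A) : Lab → Prop
  | Lab.inn => F.n1 a ≤ outCnt F lam a ∧ inCnt F lam a < F.m2 a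
  | Lab.out => F.m1 a ≤ inCnt F lam a ∧ outCnt F lam a < F.n2 a
  | Lab.undec =>
      (F.n2 a ≤ outCnt F lam a ∧ F.m2 a ≤ inCnt F lam a) ∨
      (F.n1 a ≤ outCnt F lam a ∧ outCnt F lam a < F.n2 a) ∨
      (F.m1 a ≤ inCnt F lam a ∧ inCnt F lam a < F.m2 a) ∨
      (outCnt F lam a < F.n1 a ∧ inCnt F lam a < F.m1 a)

/-- `a`'s label is proper under `lam`. -/
def proper (F : MMA A) (lam : A → Lab) (a : A) : Prop :=
  designates F lam a (lam a)

/-- Exact labelling: every argument's label is proper. -/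
def exactLab (F : MMA A) (lam : A → Lab) : Prop :=
  ∀ a, proper F lam a

/-- Pre-maximally proper labelling. -/
def preMaxProper (F : MMA A) (lam : A → Lab) : Prop :=
  ∀ a, proper F lam a ∨ lam a = Lab.undec

/-- Maximally proper labelling. -/
def maxProper (F : MMA A) (lam : A → Lab) : Prop :=
  preMaxProper F lam ∧
    ∀ lam', preMaxProper F lam' → ∀ a, proper F lam' a → proper F lam a

/-- The order `⪯` on labellings. -/
def labLE (l1 l2 : A → Lab) : Prop :=
  ∀ a, (l1 a = Lab.inn → l2 a = Lab.inn) ∧ (l1 a = Lab.out → l2 a = Lab.out)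

/-- No attacks and `f_Q = ((0,1),(0,1))`: both counts are `0`, which meets the `in`, `out` and
`undec` conditions at once. -/
def MMA.unattacked (A : Type) [Fintype A] [DecidableEq A] : MMA A where
  R _ _ := False
  decR _ _ := isFalse id
  n1 _ := 0
  n2 _ := 1
  m1 _ := 0
  m2 _ := 1
  hn _ := zero_le_one
  hm _ := zero_le_one

@[simp]
theorem outCnt_unattacked (lam : A → Lab) (a : A) : outCnt (MMA.unattacked A) lam a = 0 := by
  simp [outCnt, MMA.unattacked]

@[simp]
theorem inCnt_unattacked (lam : A → Lab) (a : A) : inCnt (MMA.unattacked A) lam a = 0 := by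
  simp [inCnt, MMA.unattacked]

theorem designates_unattacked (lam : A → Lab) (a : A) (l : Lab) :
    designates (MMA.unattacked A) lam a l := by
  cases l <;> simp only [designates, outCnt_unattacked, inCnt_unattacked] <;> simp [MMA.unattacked]

theorem stmt2 :
    ∃ (n : ℕ) (F : MMA (Fin n)) (a : Fin n) (lam : Fin n → Lab) (l1 l2 : Lab),
      l1 ≠ l2 ∧ designates F lam a l1 ∧ designates F lam a l2 :=
  ⟨1, MMA.unattacked (Fin 1), 0, fun _ => Lab.undec, Lab.inn, Lab.out, nofun,
    designates_unattacked _ _ _, designates_unattacked _ _ _⟩
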